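/- arXiv:2012.03311 — 2 statements merged into one kernel-verified Lean document; each statement's English description precedes it below -/
import Mathlib

section
/- Let I be an ideal on ℕ. An infinite real matrix A = (a_{n,k}) is (Fin,I)-regular if and only if: (R1) sup_n ∑_k |a_{n,k}| < ∞; (R2) for every k, the sequence (a_{n,k})_n is I-convergent to 0; and (R3) the sequence (∑_k a_{n,k})_n is I-convergent to 1. -/
open Filter Topology

/-- Characteristic function identifying a subset of ℕ with a point of Cantor space. -/
noncomputable def chi (S : Set ℕ) : ℕ → Bool := fun n => @decide (n ∈ S) (Classical.dec _)

/-- `I` is an ideal on ℕ: hereditary, closed under finite unions, contains all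
finite sets, and does not contain ℕ. -/
structure IsIdeal (I : Set (Set ℕ)) : Prop where
  mem_of_subset : ∀ ⦃S T : Set ℕ⦄, S ⊆ T → T ∈ I → S ∈ I
  union_mem : ∀ ⦃S T : Set ℕ⦄, S ∈ I → T ∈ I → S ∪ T ∈ I
  finite_mem : ∀ ⦃S : Set ℕ⦄, S.Finite → S ∈ I
  univ_not_mem : Set.univ ∉ I

/-- The dual filter of an ideal. -/
def dualFilter (I : Set (Set ℕ)) : Set (Set ℕ) := {S | Sᶜ ∈ I}

/-- A real sequence is bounded. -/
def Bdd (y : ℕ → ℝ) : Prop := ∃ M : ℝ, ∀ n, |y n| ≤ M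

/-- The series ∑ₖ f k converges (its partial sums converge). -/
def SeriesConv (f : ℕ → ℝ) : Prop :=
  ∃ l : ℝ, Tendsto (fun N => ∑ k ∈ Finset.range N, f k) atTop (𝓝 l)

/-- The value of the series ∑ₖ f k (the limit of partial sums, when it exists). -/
noncomputable def seriesSum (f : ℕ → ℝ) : ℝ :=
  limUnder atTop (fun N => ∑ k ∈ Finset.range N, f k)

/-- All rows of `A` applied to `y` give convergent series: `Ay` is well defined. -/
def RowsConv (A : ℕ → ℕ → ℝ) (y : ℕ → ℝ) : Prop := ∀ n, SeriesConv (fun k => A n k * y k)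

/-- The sequence `Ay = (∑ₖ a_{n,k} y_k)ₙ`. -/
noncomputable def matMul (A : ℕ → ℕ → ℝ) (y : ℕ → ℝ) : ℕ → ℝ :=
  fun n => seriesSum (fun k => A n k * y k)

/-- `y` is `I`-convergent to `η`. -/
def IConvTo (I : Set (Set ℕ)) (y : ℕ → ℝ) (η : ℝ) : Prop :=
  ∀ ε : ℝ, 0 < ε → {n | ε < |y n - η|} ∈ I

/-- `y` is `I`-convergent. -/
def IConv (I : Set (Set ℕ)) (y : ℕ → ℝ) : Prop := ∃ η : ℝ, IConvTo I y η

/-- `A` is a regular matrix: it maps convergent sequences to convergent sequences,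
preserving limits. -/
def RegularMatrix (A : ℕ → ℕ → ℝ) : Prop :=
  ∀ (y : ℕ → ℝ) (l : ℝ), Tendsto y atTop (𝓝 l) →
    RowsConv A y ∧ Tendsto (matMul A y) atTop (𝓝 l)

/-- `A` is `(Fin, I)`-regular: it maps bounded convergent sequences to bounded
`I`-convergent sequences, preserving the limit. -/
def FinIRegular (I : Set (Set ℕ)) (A : ℕ → ℕ → ℝ) : Prop :=
  ∀ y : ℕ → ℝ, Bdd y → ∀ l : ℝ, Tendsto y atTop (𝓝 l) →
    RowsConv A y ∧ Bdd (matMul A y) ∧ IConvTo I (matMul A y) l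

/-- `S ⊆ ℕ` has asymptotic density zero. -/
noncomputable def DensityZero (S : Set ℕ) : Prop :=
  Tendsto (fun n : ℕ =>
      (((Finset.range (n + 1)).filter (fun m => @decide (m ∈ S) (Classical.dec _) = true)).card : ℝ) / n)
    atTop (𝓝 0)

/-- `y` is statistically convergent. -/
noncomputable def StatConv (y : ℕ → ℝ) : Prop :=
  ∃ η : ℝ, ∀ ε : ℝ, 0 < ε → DensityZero {n | ε < |y n - η|}

/-- The ideal Fin × Fin, represented as an ideal on ℕ via the 2-adic valuation. -/
def FinTimesFin : Set (Set ℕ) :=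
  {S | ∀ᶠ k in atTop, {n ∈ S | padicValNat 2 n = k}.Finite}

/-- `I` contains an isomorphic copy of `J`. -/
def ContainsIsoCopy (I J : Set (Set ℕ)) : Prop :=
  ∃ ι : ℕ → ℕ, Function.Injective ι ∧ ∀ S : Set ℕ, S ∈ J ↔ ι ⁻¹' S ∈ I

/-- A family of subsets of ℕ is Borel (as a subset of the Cantor space `ℕ → Bool`). -/
def BorelFamily (𝒜 : Set (Set ℕ)) : Prop := @MeasurableSet (ℕ → Bool) (borel (ℕ → Bool)) (chi '' 𝒜)

/-- A family of subsets of ℕ is meager (as a subset of the Cantor space `ℕ → Bool`). -/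
def MeagerFamily (𝒜 : Set (Set ℕ)) : Prop := IsMeagre (chi '' 𝒜)

/-- An F_σ subset of the Cantor space. -/
def IsFSigma (K : Set (ℕ → Bool)) : Prop :=
  ∃ F : ℕ → Set (ℕ → Bool), (∀ n, IsClosed (F n)) ∧ K = ⋃ n, F n

/-- A family of subsets of ℕ is F_{σδ} (as a subset of the Cantor space). -/
def FSigmaDeltaFamily (𝒜 : Set (Set ℕ)) : Prop :=
  ∃ F : ℕ → ℕ → Set (ℕ → Bool), (∀ i j, IsClosed (F i j)) ∧ chi '' 𝒜 = ⋂ i, ⋃ j, F i j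

/-- The space Σ of strictly increasing functions ℕ → ℕ, as a subspace of ℕ^ℕ. -/
abbrev MonoSeq : Type := {σ : ℕ → ℕ // StrictMono σ}

/-- The set Σ_{x,A}(I) of those σ ∈ Σ for which A σ(x) is well defined and I-convergent. -/
noncomputable def SigmaSet (x : ℕ → ℝ) (A : ℕ → ℕ → ℝ) (I : Set (Set ℕ)) : Set MonoSeq :=
  {σ | RowsConv A (fun k => x (σ.1 k)) ∧ IConv I (matMul A (fun k => x (σ.1 k)))}

/-- `I*` is ω-diagonalizable by `I*`-universal sets. -/
def OmegaDiagonalizable (I : Set (Set ℕ)) : Prop :=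
  ∃ F : ℕ → ℕ → Set ℕ,
    (∀ n k, (F n k).Finite ∧ (F n k).Nonempty) ∧
    (∀ n, ∀ A ∈ dualFilter I, ∃ k, F n k ⊆ A) ∧
    (∀ A ∈ dualFilter I, ∃ n m, ∀ k, m < k → (F n k ∩ A).Nonempty)

/-- `y` is `I`-bounded. -/
def IBounded (I : Set (Set ℕ)) (y : ℕ → ℝ) : Prop := ∃ m : ℕ, {n | (m : ℝ) ≤ |y n|} ∈ I

/-- The metric d(σ₁,σ₂) = ∑_{i ∈ Im σ₁ Δ Im σ₂} 2^{-i} on Σ. -/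
noncomputable def dSigma (σ₁ σ₂ : MonoSeq) : ℝ :=
  ∑' i : ℕ, Set.indicator (symmDiff (Set.range σ₁.1) (Set.range σ₂.1)) (fun i => (2 : ℝ)⁻¹ ^ i) i

/-
Read `I`-convergence as convergence along the dual filter of `I`. Conditions (R2) and (R3) are
what `A` does to the unit vectors and to the constant sequence `1`. Conversely, under (R1)–(R3),
`Ay - l = A(y - l) + l (A1 - 1)`, and `A` sends null sequences to sequences tending to `0` along
any filter on which its columns tend to `0`: split each row at a column `K` beyond which
`|y_k - l|` is small; the head is a finite combination of columns, the tail is controlled by (R1).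
The necessity of (R1) is Banach–Steinhaus on `c₀`: the rows act on `c₀` as functionals, and
testing them on truncated sign vectors bounds the partial sums of `|a_{n,k}|` by their norms.
That a row is in `ℓ¹` at all follows from the same argument applied to its truncations.
-/

open Finset
open scoped ZeroAtInfty

section AbsSummable

variable {κ : Type*} {a y : κ → ℝ} {M : ℝ}

lemma summable_mul_of_summable_abs (ha : Summable fun k => |a k|) (hy : ∀ k, |y k| ≤ M) :
    Summable fun k => a k * y k :=
  (ha.mul_right M).of_norm_bounded fun k => by
    rw [Real.norm_eq_abs, abs_mul]; exact mul_le_mul_of_nonneg_left (hy k) (abs_nonneg _)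

lemma abs_tsum_mul_le (ha : Summable fun k => |a k|) (hy : ∀ k, |y k| ≤ M) :
    |∑' k, a k * y k| ≤ (∑' k, |a k|) * M :=
  tsum_of_norm_bounded (ha.hasSum.mul_right M) fun k => by
    rw [Real.norm_eq_abs, abs_mul]; exact mul_le_mul_of_nonneg_left (hy k) (abs_nonneg _)

end AbsSummable

lemma matMul_eq_of_hasSum {A : ℕ → ℕ → ℝ} {y : ℕ → ℝ} {n : ℕ} {s : ℝ}
    (h : HasSum (fun k => A n k * y k) s) : matMul A y n = s :=
  h.tendsto_sum_nat.limUnder_eq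

lemma matMul_eq_tsum {A : ℕ → ℕ → ℝ} {y : ℕ → ℝ} {n : ℕ}
    (h : Summable fun k => A n k * y k) : matMul A y n = ∑' k, A n k * y k :=
  matMul_eq_of_hasSum h.hasSum

namespace ZeroAtInftyContinuousMap

variable {β : Type*} [SeminormedAddCommGroup β]

lemma norm_apply_le {α : Type*} [TopologicalSpace α] (f : C₀(α, β)) (x : α) : ‖f x‖ ≤ ‖f‖ :=
  norm_toBCF_eq_norm (f := f) ▸ f.toBCF.norm_coe_le_norm x

lemma norm_le_of_forall_norm_apply_le {α : Type*} [TopologicalSpace α] {f : C₀(α, β)} {M : ℝ}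
    (hM : 0 ≤ M) (h : ∀ x, ‖f x‖ ≤ M) : ‖f‖ ≤ M :=
  norm_toBCF_eq_norm (f := f) ▸ (BoundedContinuousFunction.norm_le hM).2 h

lemma tendsto_atTop_zero (f : C₀(ℕ, β)) : Tendsto f atTop (𝓝 0) := by
  simpa [cocompact_eq_cofinite, Nat.cofinite_eq_atTop] using f.zero_at_infty'

def ofTendsto (f : ℕ → β) (hf : Tendsto f atTop (𝓝 0)) : C₀(ℕ, β) where
  toFun := f
  continuous_toFun := continuous_of_discreteTopology
  zero_at_infty' := by rwa [cocompact_eq_cofinite, Nat.cofinite_eq_atTop]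

@[simp]
lemma ofTendsto_apply (f : ℕ → β) (hf : Tendsto f atTop (𝓝 0)) (k : ℕ) : ofTendsto f hf k = f k :=
  rfl

noncomputable def tsumMulCLM (a : ℕ → ℝ) (ha : Summable fun k => |a k|) : C₀(ℕ, ℝ) →L[ℝ] ℝ :=
  LinearMap.mkContinuous
    { toFun := fun y => ∑' k, a k * y k
      map_add' := fun y z => by
        simp only [coe_add, Pi.add_apply, mul_add]
        exact (summable_mul_of_summable_abs ha y.norm_apply_le).tsum_add
          (summable_mul_of_summable_abs ha z.norm_apply_le)
      map_smul' := fun c y => by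
        simp only [coe_smul, Pi.smul_apply, smul_eq_mul, RingHom.id_apply, mul_left_comm _ c,
          tsum_mul_left] }
    (∑' k, |a k|) fun y => abs_tsum_mul_le ha y.norm_apply_le

lemma tsumMulCLM_apply (a : ℕ → ℝ) (ha : Summable fun k => |a k|) (y : C₀(ℕ, ℝ)) :
    tsumMulCLM a ha y = ∑' k, a k * y k :=
  rfl

end ZeroAtInftyContinuousMap

open ZeroAtInftyContinuousMap in
theorem exists_sum_range_abs_le_of_forall_zeroAtInfty {ι : Type*} (a : ι → ℕ → ℝ)
    (ha : ∀ i, Summable fun k => |a i k|)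
    (h : ∀ y : C₀(ℕ, ℝ), ∃ C, ∀ i, |∑' k, a i k * y k| ≤ C) :
    ∃ C, ∀ i N, ∑ k ∈ range N, |a i k| ≤ C := by
  obtain ⟨C, hC⟩ := banach_steinhaus (g := fun i => tsumMulCLM (a i) (ha i)) h
  refine ⟨C, fun i N => ?_⟩
  set sgn : ℕ → ℝ := fun k => if k < N then SignType.sign (a i k) else 0
  have hsgn : Tendsto sgn atTop (𝓝 0) :=
    tendsto_const_nhds.congr' <| (eventually_ge_atTop N).mono fun k hk => by
      simp [sgn, not_lt.2 hk]
  have hnorm : ‖ofTendsto sgn hsgn‖ ≤ 1 := by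
    refine norm_le_of_forall_norm_apply_le zero_le_one fun k => ?_
    simp only [ofTendsto_apply, sgn, Real.norm_eq_abs]
    split_ifs
    · rcases SignType.sign (a i k) with _ | _ | _ <;> simp
    · simp
  have heval : tsumMulCLM (a i) (ha i) (ofTendsto sgn hsgn) = ∑ k ∈ range N, |a i k| := by
    rw [tsumMulCLM_apply, tsum_eq_sum (s := range N) fun k hk => by simp_all [sgn]]
    exact sum_congr rfl fun k hk => by simp_all [sgn, self_mul_sign]
  calc ∑ k ∈ range N, |a i k| ≤ ‖tsumMulCLM (a i) (ha i)‖ * ‖ofTendsto sgn hsgn‖ :=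
        heval ▸ (le_abs_self _).trans ((tsumMulCLM (a i) (ha i)).le_opNorm _)
    _ ≤ C * 1 := mul_le_mul (hC i) hnorm (norm_nonneg _) ((norm_nonneg _).trans (hC i))
    _ = C := mul_one C

namespace FinIRegular

variable {I : Set (Set ℕ)} {A : ℕ → ℕ → ℝ}

lemma rowsConv_and_bdd_of_zeroAtInfty (hA : FinIRegular I A) (y : C₀(ℕ, ℝ)) :
    RowsConv A y ∧ Bdd (matMul A y) :=
  let ⟨hconv, hbdd, _⟩ := hA y ⟨‖y‖, y.norm_apply_le⟩ 0 y.tendsto_atTop_zero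
  ⟨hconv, hbdd⟩

lemma summable_abs_row (hA : FinIRegular I A) (n : ℕ) : Summable fun k => |A n k| := by
  have htrunc : ∀ y : C₀(ℕ, ℝ), ∃ C, ∀ N, |∑' k, (if k < N then A n k else 0) * y k| ≤ C := by
    intro y
    obtain ⟨s, hs⟩ := (hA.rowsConv_and_bdd_of_zeroAtInfty y).1 n
    obtain ⟨C, hC⟩ := isBounded_iff_forall_norm_le.1 (Metric.isBounded_range_of_tendsto _ hs)
    refine ⟨C, fun N => ?_⟩
    rw [tsum_eq_sum (s := range N) fun k hk => by simp_all,
      sum_congr rfl fun k hk => by rw [if_pos (mem_range.1 hk)]]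
    exact hC _ ⟨N, rfl⟩
  obtain ⟨C, hC⟩ := exists_sum_range_abs_le_of_forall_zeroAtInfty
    (fun N k => if k < N then A n k else 0)
    (fun N => summable_of_ne_finset_zero (s := range N) fun k hk => by simp_all) htrunc
  refine summable_of_sum_range_le (c := C) (fun _ => abs_nonneg _) fun N => ?_
  calc ∑ k ∈ range N, |A n k| = ∑ k ∈ range N, |if k < N then A n k else 0| :=
        sum_congr rfl fun k hk => by simp_all
    _ ≤ C := hC N N

lemma exists_sum_range_abs_le (hA : FinIRegular I A) :
    ∃ C, ∀ n N, ∑ k ∈ range N, |A n k| ≤ C :=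
  exists_sum_range_abs_le_of_forall_zeroAtInfty A hA.summable_abs_row fun y => by
    obtain ⟨M, hM⟩ := (hA.rowsConv_and_bdd_of_zeroAtInfty y).2
    refine ⟨M, fun n => ?_⟩
    rw [← matMul_eq_tsum (summable_mul_of_summable_abs (hA.summable_abs_row n) y.norm_apply_le)]
    exact hM n

lemma iConvTo_column (hA : FinIRegular I A) (k : ℕ) : IConvTo I (fun n => A n k) 0 := by
  set e : ℕ → ℝ := fun j => if j = k then 1 else 0
  have he : Tendsto e atTop (𝓝 0) :=
    tendsto_const_nhds.congr' <| (eventually_gt_atTop k).mono fun j hj => by simp [e, hj.ne']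
  have hAe : matMul A e = fun n => A n k := funext fun n => matMul_eq_of_hasSum <| by
    convert hasSum_ite_eq k (A n k) using 2 with j
    by_cases hj : j = k <;> simp [e, hj]
  simpa only [hAe] using (hA e ⟨1, fun j => by by_cases j = k <;> simp [e, *]⟩ 0 he).2.2

end FinIRegular

namespace IsIdeal

variable {I : Set (Set ℕ)}

def toFilter (hI : IsIdeal I) : Filter ℕ :=
  comk (· ∈ I) (hI.finite_mem Set.finite_empty) (fun _ ht _ hst => hI.mem_of_subset hst ht)
    fun _ hs _ ht => hI.union_mem hs ht

lemma iConvTo_iff_tendsto (hI : IsIdeal I) {y : ℕ → ℝ} {η : ℝ} :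
    IConvTo I y η ↔ Tendsto y hI.toFilter (𝓝 η) := by
  simp only [Metric.nhds_basis_closedBall.tendsto_right_iff, Filter.Eventually, toFilter,
    mem_comk, Metric.mem_closedBall, Real.dist_eq, Set.compl_ofPred, not_le, IConvTo]

end IsIdeal

theorem tendsto_tsum_mul_of_tendsto_zero {ι : Type*} {F : Filter ι} {a : ι → ℕ → ℝ} {C : ℝ}
    (ha : ∀ i, Summable fun k => |a i k|) (hC : ∀ i, ∑' k, |a i k| ≤ C)
    (hcol : ∀ k, Tendsto (a · k) F (𝓝 0)) {z : ℕ → ℝ} (hz : Tendsto z atTop (𝓝 0)) :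
    Tendsto (fun i => ∑' k, a i k * z k) F (𝓝 0) := by
  rw [Metric.tendsto_nhds]
  intro ε hε
  obtain ⟨δ, hδ, hCδ⟩ := exists_pos_mul_lt (half_pos hε) C
  obtain ⟨K, hK⟩ : ∃ K, ∀ k ≥ K, |z k| ≤ δ := by
    simpa [Real.dist_eq] using
      eventually_atTop.1 (hz.eventually (Metric.closedBall_mem_nhds 0 hδ))
  have hhead : Tendsto (fun i => ∑ k ∈ range K, a i k * z k) F (𝓝 0) := by
    simpa using tendsto_finsetSum (range K) fun k _ => (hcol k).mul_const (z k)
  filter_upwards [Metric.tendsto_nhds.1 hhead _ (half_pos hε)] with i hi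
  have hshift : Summable fun j => |a i (j + K)| := (summable_nat_add_iff K).2 (ha i)
  have hzK : ∀ j, |z (j + K)| ≤ δ := fun j => hK _ (Nat.le_add_left K j)
  have htail : |∑' j, a i (j + K) * z (j + K)| ≤ C * δ := calc
    _ ≤ (∑' j, |a i (j + K)|) * δ := abs_tsum_mul_le hshift hzK
    _ ≤ (∑' k, |a i k|) * δ := by
        have hsplit := (ha i).sum_add_tsum_nat_add K
        have hhead_nonneg : 0 ≤ ∑ k ∈ range K, |a i k| := sum_nonneg fun _ _ => abs_nonneg _
        exact mul_le_mul_of_nonneg_right (by linarith) hδ.le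
    _ ≤ C * δ := by gcongr; exact hC i
  have hsum : Summable fun k => a i k * z k :=
    (summable_nat_add_iff K).1 (summable_mul_of_summable_abs hshift hzK)
  rw [Real.dist_eq, sub_zero] at hi ⊢
  rw [← hsum.sum_add_tsum_nat_add K]
  calc _ ≤ |∑ k ∈ range K, a i k * z k| + |∑' j, a i (j + K) * z (j + K)| := abs_add_le _ _
    _ < ε := by linarith

theorem finIRegular_of_sum_range_abs_le {I : Set (Set ℕ)} (hI : IsIdeal I) {A : ℕ → ℕ → ℝ}
    {C : ℝ} (hC : ∀ n N, ∑ k ∈ range N, |A n k| ≤ C)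
    (hcol : ∀ k, IConvTo I (fun n => A n k) 0) (hsum : IConvTo I (matMul A fun _ => 1) 1) :
    FinIRegular I A := by
  rintro y ⟨M, hM⟩ l hy
  have hrow : ∀ n, Summable fun k => |A n k| := fun n =>
    summable_of_sum_range_le (fun _ => abs_nonneg _) (hC n)
  have hrowC : ∀ n, ∑' k, |A n k| ≤ C := fun n =>
    Real.tsum_le_of_sum_range_le (fun _ => abs_nonneg _) (hC n)
  have hAy : ∀ n, Summable fun k => A n k * y k := fun n => summable_mul_of_summable_abs (hrow n) hM
  refine ⟨fun n => ⟨_, (hAy n).hasSum.tendsto_sum_nat⟩, ⟨C * M, fun n => ?_⟩, ?_⟩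
  · rw [matMul_eq_tsum (hAy n)]
    exact (abs_tsum_mul_le (hrow n) hM).trans
      (mul_le_mul_of_nonneg_right (hrowC n) ((abs_nonneg _).trans (hM 0)))
  have hsplit : matMul A y = fun n => ∑' k, A n k * (y k - l) + l * matMul A (fun _ => 1) n := by
    funext n
    have hA1 : Summable fun k => A n k * 1 := by simpa using (hrow n).of_abs
    have hAyl : Summable fun k => A n k * (y k - l) :=
      summable_mul_of_summable_abs (hrow n) fun k => (abs_sub _ _).trans (add_le_add (hM k) le_rfl)
    rw [matMul_eq_tsum (hAy n), matMul_eq_tsum hA1, ← tsum_mul_left,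
      ← hAyl.tsum_add (hA1.mul_left l)]
    exact tsum_congr fun k => by ring
  simp_rw [hI.iConvTo_iff_tendsto] at hcol hsum ⊢
  simpa [hsplit] using
    (tendsto_tsum_mul_of_tendsto_zero hrow hrowC hcol (tendsto_sub_nhds_zero_iff.2 hy)).add
      (hsum.const_mul l)

/-- Silverman–Toeplitz type characterization: `A` is (Fin,I)-regular iff
(R1) sup_n ∑_k |a_{n,k}| < ∞, (R2) each column is I-convergent to 0, and
(R3) each row sum converges and the sequence of row sums is I-convergent to 1. -/
theorem stmt_5 (I : Set (Set ℕ)) (hI : IsIdeal I) (A : ℕ → ℕ → ℝ) :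
    FinIRegular I A ↔
      ((∃ C : ℝ, ∀ n N : ℕ, ∑ k ∈ Finset.range N, |A n k| ≤ C) ∧
       (∀ k : ℕ, IConvTo I (fun n => A n k) 0) ∧
       (RowsConv A (fun _ => 1) ∧ IConvTo I (matMul A (fun _ => 1)) 1)) := by
  constructor
  · intro hA
    obtain ⟨hconv, -, hlim⟩ := hA (fun _ => 1) ⟨1, fun _ => by simp⟩ 1 tendsto_const_nhds
    exact ⟨hA.exists_sum_range_abs_le, hA.iConvTo_column, hconv, hlim⟩
  · rintro ⟨⟨C, hC⟩, hcol, -, hsum⟩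
    exact finIRegular_of_sum_range_abs_le hI hC hcol hsum
end

section
/- Let I be a Borel ideal on ℕ, x a bounded real sequence, and A a (Fin,I)-regular infinite real matrix. Then the set Σ_{x,A}(I) = {σ ∈ Σ : Aσ(x) is well defined and I-convergent} is a Borel subset of Σ, and the map T : Σ_{x,A}(I) → ℝ sending σ to the I-limit of Aσ(x) is Borel measurable. -/
open Filter Topology

/-!
Every condition involved is a countable Boolean combination of statements
`{n | (Aσ(x))ₙ ∈ B} ∈ I` with `B` a rational half-line. Such a statement is Borel in `σ`
because `I` is Borel and each entry of `Aσ(x)` is a pointwise limit of finite sums, hence Borel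
on the Borel set of `σ` where the rows converge. `I`-convergence of `y` says that `y` is
`I`-bounded above and below by rationals and that for rationals `p < q` either `{y ≤ p} ∈ I` or
`{q < y} ∈ I`; then `I-lim y < a` iff `{q < y} ∈ I` for some rational `q < a`.
-/
open MeasureTheory

lemma chi_injective : Function.Injective chi := fun S T h => by
  ext n
  simpa [chi] using congrFun h n

lemma measurable_setOf_mem_of_borelFamily {α : Type*} [MeasurableSpace α] {𝒜 : Set (Set ℕ)}
    (h𝒜 : BorelFamily 𝒜) {R : α → ℕ → Prop} (hR : ∀ n, Measurable (R · n)) :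
    Measurable fun a => {n | R a n} ∈ 𝒜 := by
  have hchi : Measurable fun a => chi {n | R a n} :=
    measurable_pi_lambda _ fun n => measurable_to_bool <| by
      convert (hR n).setOf using 1
      ext a
      simp [chi]
  have h𝒜' : MeasurableSet (chi '' 𝒜) := by rwa [BorelSpace.measurable_eq (α := ℕ → Bool)]
  refine measurableSet_setOfPred.1 ?_
  convert hchi h𝒜' using 1
  ext a
  exact chi_injective.mem_set_image.symm

lemma IsIdeal.lt_of_setOf_le_mem_of_setOf_lt_mem {I : Set (Set ℕ)} (hI : IsIdeal I)
    {y : ℕ → ℝ} {p q : ℝ} (hp : {n | y n ≤ p} ∈ I) (hq : {n | q < y n} ∈ I) : p < q := by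
  by_contra! hqp
  refine hI.univ_not_mem (hI.mem_of_subset (fun n _ => ?_) (hI.union_mem hp hq))
  by_cases h : y n ≤ p
  · exact Or.inl h
  · exact Or.inr (lt_of_le_of_lt hqp (not_le.1 h))

section IConv

variable {I : Set (Set ℕ)} {y : ℕ → ℝ} {η : ℝ}

theorem iConvTo_iff_rat (hI : IsIdeal I) :
    IConvTo I y η ↔ (∀ q : ℚ, η < q → {n | (q : ℝ) < y n} ∈ I) ∧
      ∀ p : ℚ, (p : ℝ) < η → {n | y n ≤ p} ∈ I := by
  refine ⟨fun h => ⟨fun q hq => ?_, fun p hp => ?_⟩, fun ⟨hupper, hlower⟩ ε hε => ?_⟩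
  · refine hI.mem_of_subset (fun n hn => ?_) (h (q - η) (sub_pos.2 hq))
    exact (sub_lt_sub_right hn η).trans_le (le_abs_self _)
  · refine hI.mem_of_subset (fun n (hn : y n ≤ p) => ?_) (h ((η - p) / 2) (by linarith))
    show (η - p) / 2 < |y n - η|
    rw [abs_sub_comm]
    exact lt_of_lt_of_le (by linarith) (le_abs_self _)
  · obtain ⟨q, hηq, hqε⟩ := exists_rat_btwn (lt_add_of_pos_right η hε)
    obtain ⟨p, hεp, hpη⟩ := exists_rat_btwn (sub_lt_self η hε)
    refine hI.mem_of_subset (fun n (hn : ε < |y n - η|) => ?_)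
      (hI.union_mem (hupper q hηq) (hlower p hpη))
    rcases lt_abs.1 hn with hn | hn
    · exact Or.inl (show (q : ℝ) < y n by linarith)
    · exact Or.inr (show y n ≤ p by linarith)

theorem IConvTo.lt_iff (hI : IsIdeal I) (h : IConvTo I y η) (a : ℝ) :
    η < a ↔ ∃ q : ℚ, (q : ℝ) < a ∧ {n | (q : ℝ) < y n} ∈ I := by
  refine ⟨fun ha => ?_, fun ⟨q, hqa, hq⟩ => ?_⟩
  · obtain ⟨q, hηq, hqa⟩ := exists_rat_btwn ha
    exact ⟨q, hqa, ((iConvTo_iff_rat hI).1 h).1 q hηq⟩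
  · by_contra! haη
    have hle := ((iConvTo_iff_rat hI).1 h).2 q (hqa.trans_le haη)
    exact lt_irrefl _ (hI.lt_of_setOf_le_mem_of_setOf_lt_mem hle hq)

theorem iConv_iff_rat (hI : IsIdeal I) :
    IConv I y ↔ (∃ q : ℚ, {n | (q : ℝ) < y n} ∈ I) ∧ (∃ p : ℚ, {n | y n ≤ p} ∈ I) ∧
      ∀ p q : ℚ, p < q → {n | y n ≤ p} ∈ I ∨ {n | (q : ℝ) < y n} ∈ I := by
  constructor
  · rintro ⟨η, h⟩
    obtain ⟨hupper, hlower⟩ := (iConvTo_iff_rat hI).1 h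
    obtain ⟨q, hq⟩ := exists_rat_gt η
    obtain ⟨p, hp⟩ := exists_rat_lt η
    refine ⟨⟨q, hupper q hq⟩, ⟨p, hlower p hp⟩, fun p q hpq => ?_⟩
    rcases lt_or_ge (p : ℝ) η with hpη | hηp
    · exact Or.inl (hlower p hpη)
    · exact Or.inr (hupper q (hηp.trans_lt (by exact_mod_cast hpq)))
  · rintro ⟨⟨q₀, hq₀⟩, ⟨p₀, hp₀⟩, hsplit⟩
    -- the `I`-limit is the infimum of the rational upper `I`-bounds of `y`
    set U : Set ℝ := (↑) '' {q : ℚ | {n | (q : ℝ) < y n} ∈ I}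
    have hU : BddBelow U := ⟨p₀, by
      rintro _ ⟨q, hq, rfl⟩
      exact (hI.lt_of_setOf_le_mem_of_setOf_lt_mem hp₀ hq).le⟩
    have hUne : U.Nonempty := ⟨q₀, q₀, hq₀, rfl⟩
    refine ⟨sInf U, (iConvTo_iff_rat hI).2 ⟨fun q hq => ?_, fun p hp => ?_⟩⟩
    · obtain ⟨_, ⟨q', hq', rfl⟩, hq'q⟩ := exists_lt_of_csInf_lt hUne hq
      exact hI.mem_of_subset (fun n (hn : (q : ℝ) < y n) => hq'q.trans hn) hq'
    · obtain ⟨p', hpp', hp'⟩ := exists_rat_btwn hp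
      refine (hsplit p p' (by exact_mod_cast hpp')).resolve_right fun hp'U => ?_
      exact lt_irrefl _ (hp'.trans_le (csInf_le hU ⟨p', hp'U, rfl⟩))

end IConv

section Measurability

variable {α : Type*} [MeasurableSpace α]

section Series

variable {f : α → ℕ → ℝ}

lemma measurable_partialSum (hf : ∀ k, Measurable (f · k)) (N : ℕ) :
    Measurable fun a => ∑ k ∈ Finset.range N, f a k :=
  Finset.measurable_sum _ fun k _ => hf k

lemma measurableSet_setOf_seriesConv (hf : ∀ k, Measurable (f · k)) :
    MeasurableSet {a | SeriesConv (f a)} :=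
  measurableSet_exists_tendsto (measurable_partialSum hf)

lemma measurable_seriesSum (hf : ∀ k, Measurable (f · k)) (hconv : ∀ a, SeriesConv (f a)) :
    Measurable fun a => seriesSum (f a) := by
  refine measurable_of_tendsto_metrizable' atTop (measurable_partialSum hf)
    (tendsto_pi_nhds.2 fun a => ?_)
  obtain ⟨l, hl⟩ := hconv a
  rwa [seriesSum, hl.limUnder_eq]

end Series

variable {I : Set (Set ℕ)} {y : α → ℕ → ℝ}

lemma measurable_setOf_lt_mem (hIBorel : BorelFamily I) (hy : ∀ n, Measurable (y · n)) (q : ℝ) :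
    Measurable fun a => {n | q < y a n} ∈ I :=
  measurable_setOf_mem_of_borelFamily hIBorel fun n => (hy n measurableSet_Ioi).mem

lemma measurable_setOf_le_mem (hIBorel : BorelFamily I) (hy : ∀ n, Measurable (y · n)) (p : ℝ) :
    Measurable fun a => {n | y a n ≤ p} ∈ I :=
  measurable_setOf_mem_of_borelFamily hIBorel fun n => (hy n measurableSet_Iic).mem

lemma measurable_iConv (hI : IsIdeal I) (hIBorel : BorelFamily I) (hy : ∀ n, Measurable (y · n)) :
    Measurable fun a => IConv I (y a) := by
  have hlt := measurable_setOf_lt_mem hIBorel hy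
  have hle := measurable_setOf_le_mem hIBorel hy
  simp_rw [iConv_iff_rat hI]
  fun_prop

lemma measurable_of_iConvTo (hI : IsIdeal I) (hIBorel : BorelFamily I)
    (hy : ∀ n, Measurable (y · n)) {L : α → ℝ} (hL : ∀ a, IConvTo I (y a) (L a)) :
    Measurable L := by
  refine measurable_of_Iio fun b => ?_
  have hpre : L ⁻¹' Set.Iio b = {a | ∃ q : ℚ, (q : ℝ) < b ∧ {n | (q : ℝ) < y a n} ∈ I} := by
    ext a
    exact (hL a).lt_iff hI b
  rw [hpre]
  exact (Measurable.exists (ι := ℚ) fun q =>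
    measurable_const.and (measurable_setOf_lt_mem hIBorel hy q)).setOf

end Measurability

section Subsequences

variable (x : ℕ → ℝ) (A : ℕ → ℕ → ℝ)

lemma measurable_subseq_apply (k : ℕ) : Measurable fun σ : MonoSeq => x (σ.1 k) :=
  (measurable_of_countable x).comp ((measurable_pi_apply k).comp measurable_subtype_coe)

lemma measurableSet_setOf_rowsConv_subseq :
    MeasurableSet {σ : MonoSeq | RowsConv A fun k => x (σ.1 k)} := by
  simp only [RowsConv, Set.ofPred_forall]
  exact MeasurableSet.iInter fun n =>
    measurableSet_setOf_seriesConv fun k => (measurable_subseq_apply x k).const_mul (A n k)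

variable {x A} in
lemma measurable_matMul_subseq {s : Set MonoSeq} (hs : ∀ σ ∈ s, RowsConv A fun k => x (σ.1 k))
    (n : ℕ) : Measurable fun σ : s => matMul A (fun k => x (σ.1.1 k)) n :=
  measurable_seriesSum
    (fun k => ((measurable_subseq_apply x k).comp measurable_subtype_coe).const_mul (A n k))
    fun σ => hs σ σ.2 n

lemma measurableSet_sigmaSet {I : Set (Set ℕ)} (hI : IsIdeal I) (hIBorel : BorelFamily I) :
    MeasurableSet (SigmaSet x A I) := by
  set W := {σ : MonoSeq | RowsConv A fun k => x (σ.1 k)}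
  have hSigma :
      SigmaSet x A I = Subtype.val '' {σ : W | IConv I (matMul A fun k => x (σ.1.1 k))} := by
    ext σ
    exact ⟨fun hσ => ⟨⟨σ, hσ.1⟩, hσ.2, rfl⟩, fun ⟨τ, hτ, hτσ⟩ => hτσ ▸ ⟨τ.2, hτ⟩⟩
  rw [hSigma]
  exact (measurableSet_setOf_rowsConv_subseq x A).subtype_image
    (measurable_iConv hI hIBorel (measurable_matMul_subseq fun _ h => h)).setOf

end Subsequences

theorem stmt_14_general (I : Set (Set ℕ)) (hI : IsIdeal I) (hIBorel : BorelFamily I)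
    (x : ℕ → ℝ) (A : ℕ → ℕ → ℝ)
    (T : MonoSeq → ℝ)
    (hT : ∀ σ ∈ SigmaSet x A I, IConvTo I (matMul A (fun k => x (σ.1 k))) (T σ)) :
    @MeasurableSet MonoSeq (borel MonoSeq) (SigmaSet x A I) ∧
      @Measurable (SigmaSet x A I) ℝ (borel (SigmaSet x A I)) (borel ℝ)
        (fun σ => T σ.1) := by
  rw [← BorelSpace.measurable_eq (α := MonoSeq), ← BorelSpace.measurable_eq (α := SigmaSet x A I),
    ← BorelSpace.measurable_eq (α := ℝ)]
  exact ⟨measurableSet_sigmaSet x A hI hIBorel,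
    measurable_of_iConvTo hI hIBorel (measurable_matMul_subseq fun σ hσ => hσ.1)
      fun σ => hT σ σ.2⟩

/-- For a Borel ideal `I`, bounded `x`, and a (Fin,I)-regular matrix `A`,
the set Σ_{x,A}(I) is Borel in Σ and the map `T` sending σ to the I-limit of Aσ(x)
is Borel measurable on Σ_{x,A}(I). -/
theorem stmt_14 (I : Set (Set ℕ)) (hI : IsIdeal I) (hIBorel : BorelFamily I)
    (x : ℕ → ℝ) (hxb : Bdd x) (A : ℕ → ℕ → ℝ) (hA : FinIRegular I A)
    (T : MonoSeq → ℝ)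
    (hT : ∀ σ ∈ SigmaSet x A I, IConvTo I (matMul A (fun k => x (σ.1 k))) (T σ)) :
    @MeasurableSet MonoSeq (borel MonoSeq) (SigmaSet x A I) ∧
      @Measurable (SigmaSet x A I) ℝ (borel (SigmaSet x A I)) (borel ℝ)
        (fun σ => T σ.1) :=
  stmt_14_general I hI hIBorel x A T hT
end
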